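/- arXiv:2510.16927 — 3 statements merged into one kernel-verified Lean document; each statement's English description precedes it below -/
import Mathlib

section
/- Under the assumption that every row standard deviation σ_i(X) is positive, the map X ↦ LayerNorm(X) is Fréchet differentiable at X, and its derivative in an arbitrary direction V ∈ ℝ^{m×n} is D LayerNorm(X)[V] = P(X)·(V·C) − P(X)·diag(δ(V))·P(X)·M(X), where δ(V) ∈ ℝ^m is the vector with entries δ(V)_i = (1/(n·σ_i(X)))·Σ_{j=1}^n M(X)_{i,j}·(V·C)_{i,j}. -/
noncomputable section

open Matrix

attribute [local instance] Matrix.frobeniusNormedAddCommGroup Matrix.frobeniusNormedSpace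

/-- Frobenius norm of a real matrix. -/
def frob {m n : ℕ} (A : Matrix (Fin m) (Fin n) ℝ) : ℝ :=
  Real.sqrt (∑ i, ∑ j, A i j ^ 2)

/-- Spectral norm (largest singular value) of a real matrix: the operator norm of the
associated linear map between Euclidean spaces. -/
def spec {m n : ℕ} (A : Matrix (Fin m) (Fin n) ℝ) : ℝ :=
  ‖LinearMap.toContinuousLinearMap (Matrix.toEuclideanLin A)‖

/-- Centering matrix `C = Iₙ - (1/n)·𝟙𝟙ᵀ`. -/
def centerC (n : ℕ) : Matrix (Fin n) (Fin n) ℝ :=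
  1 - (n : ℝ)⁻¹ • Matrix.of (fun _ _ => (1 : ℝ))

/-- Row-centered matrix `M(X) = X·C`. -/
def centered {m n : ℕ} (X : Matrix (Fin m) (Fin n) ℝ) : Matrix (Fin m) (Fin n) ℝ :=
  X * centerC n

/-- Row standard deviations `σᵢ(X) = sqrt((1/n)·Σⱼ M(X)ᵢⱼ²)`. -/
def rowSigma {m n : ℕ} (X : Matrix (Fin m) (Fin n) ℝ) (i : Fin m) : ℝ :=
  Real.sqrt ((n : ℝ)⁻¹ * ∑ j, centered X i j ^ 2)

/-- `P(X) = diag(σ₁(X),…,σ_m(X))⁻¹`. -/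
def Pmat {m n : ℕ} (X : Matrix (Fin m) (Fin n) ℝ) : Matrix (Fin m) (Fin m) ℝ :=
  Matrix.diagonal fun i => (rowSigma X i)⁻¹

/-- `LayerNorm(X) = P(X)·M(X)`. -/
def layerNorm {m n : ℕ} (X : Matrix (Fin m) (Fin n) ℝ) : Matrix (Fin m) (Fin n) ℝ :=
  Pmat X * centered X


/-! `LayerNorm(X) = P(X)·M(X)` with `M` linear, so by the product rule everything reduces to the
derivative of `σᵢ`. Since `σᵢ² = (1/n)·Σⱼ M(X)ᵢⱼ²`,
`Dσᵢ(X)[V] = (1/(n·σᵢ))·Σⱼ M(X)ᵢⱼ·(V·C)ᵢⱼ = δ(V)ᵢ`, hence `D(σᵢ⁻¹)[V] = -δ(V)ᵢ/σᵢ²`; and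
`diag(δ(V)/σ²) = P·diag(δ(V))·P` because diagonal matrices commute. -/

/-- Mathlib's power, square-root and bilinear-map derivative lemmas type their derivatives with the
topology of the norm, which the global `Matrix` topology (used by the statement) equals only after
unfolding. Making the Frobenius topology the instance in the section below lets `simp` evaluate
those derivatives; the two worlds meet again by definitional unfolding in the final theorem. -/
abbrev Matrix.frobeniusTopology {m n : Type*} [Fintype m] [Fintype n] :
    TopologicalSpace (Matrix m n ℝ) :=
  (frobeniusNormedAddCommGroup : NormedAddCommGroup (Matrix m n ℝ)).toUniformSpace
    |>.toTopologicalSpace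

section FrobeniusTopology

attribute [local instance] Matrix.frobeniusTopology

namespace Matrix

variable {l m n : Type*} [Fintype l] [Fintype m] [Fintype n]

def mulCLM : Matrix l m ℝ →L[ℝ] Matrix m n ℝ →L[ℝ] Matrix l n ℝ :=
  LinearMap.toContinuousLinearMap
    (LinearMap.toContinuousLinearMap.toLinearMap ∘ₗ mulLinearMap ℝ)

@[simp]
theorem mulCLM_apply (A : Matrix l m ℝ) (B : Matrix m n ℝ) : mulCLM A B = A * B := rfl

def entryCLM (i : m) (j : n) : Matrix m n ℝ →L[ℝ] ℝ :=
  LinearMap.toContinuousLinearMap (entryLinearMap ℝ ℝ i j)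

@[simp]
theorem entryCLM_apply (i : m) (j : n) (A : Matrix m n ℝ) : entryCLM i j A = A i j := rfl

variable [DecidableEq m]

def diagonalCLM : (m → ℝ) →L[ℝ] Matrix m m ℝ :=
  LinearMap.toContinuousLinearMap (diagonalLinearMap m ℝ ℝ)

@[simp]
theorem diagonalCLM_apply (d : m → ℝ) : diagonalCLM d = diagonal d := rfl

end Matrix

open Matrix

variable {m n : ℕ}

def centeredCLM (m n : ℕ) : Matrix (Fin m) (Fin n) ℝ →L[ℝ] Matrix (Fin m) (Fin n) ℝ :=
  LinearMap.toContinuousLinearMap (mulRightLinearMap (Fin m) ℝ (centerC n))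

@[simp]
theorem centeredCLM_apply (V : Matrix (Fin m) (Fin n) ℝ) : centeredCLM m n V = V * centerC n :=
  rfl

theorem hasFDerivAt_centered (X : Matrix (Fin m) (Fin n) ℝ) :
    HasFDerivAt centered (centeredCLM m n) X :=
  (centeredCLM m n).hasFDerivAt

def rowSigmaDeriv (X : Matrix (Fin m) (Fin n) ℝ) (i : Fin m) :
    Matrix (Fin m) (Fin n) ℝ →L[ℝ] ℝ :=
  ((n : ℝ) * rowSigma X i)⁻¹ • ∑ j, centered X i j • (entryCLM i j).comp (centeredCLM m n)

theorem rowSigmaDeriv_apply (X V : Matrix (Fin m) (Fin n) ℝ) (i : Fin m) :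
    rowSigmaDeriv X i V =
      ((n : ℝ) * rowSigma X i)⁻¹ * ∑ j, centered X i j * (V * centerC n) i j := by
  simp [rowSigmaDeriv]

theorem hasFDerivAt_rowSigma {X : Matrix (Fin m) (Fin n) ℝ} {i : Fin m}
    (hσ : 0 < rowSigma X i) :
    HasFDerivAt (fun Y => rowSigma Y i) (rowSigmaDeriv X i) X := by
  have hentry (j : Fin n) : HasFDerivAt (fun Y => centered Y i j)
      ((entryCLM i j).comp (centeredCLM m n)) X :=
    (entryCLM i j).hasFDerivAt.comp X (hasFDerivAt_centered X)
  have hvar := (HasFDerivAt.fun_sum (u := Finset.univ) fun j _ => (hentry j).pow 2).const_mul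
    (n : ℝ)⁻¹
  refine (hvar.sqrt (Real.sqrt_pos.mp hσ).ne').congr_fderiv ?_
  ext V
  have hσ_eq : √((n : ℝ)⁻¹ * ∑ j, centered X i j ^ 2) = rowSigma X i := rfl
  rw [hσ_eq]
  simp only [rowSigmaDeriv_apply, _root_.smul_apply, _root_.sum_apply, smul_eq_mul,
    ContinuousLinearMap.comp_apply, centeredCLM_apply, entryCLM_apply, Finset.mul_sum]
  exact Finset.sum_congr rfl fun j _ => by ring

theorem hasFDerivAt_Pmat {X : Matrix (Fin m) (Fin n) ℝ} (hσ : ∀ i, 0 < rowSigma X i) :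
    HasFDerivAt Pmat
      (diagonalCLM.comp (.pi fun i => (-(rowSigma X i ^ 2)⁻¹) • rowSigmaDeriv X i)) X := by
  have hinv : HasFDerivAt (fun Y i => (rowSigma Y i)⁻¹)
      (.pi fun i => (-(rowSigma X i ^ 2)⁻¹) • rowSigmaDeriv X i) X :=
    hasFDerivAt_pi.2 fun i =>
      (hasDerivAt_inv (hσ i).ne').comp_hasFDerivAt X (hasFDerivAt_rowSigma (hσ i))
  exact diagonalCLM.hasFDerivAt.comp X hinv

theorem Pmat_mul_diagonal_mul_Pmat (X : Matrix (Fin m) (Fin n) ℝ) (d : Fin m → ℝ) :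
    Pmat X * diagonal d * Pmat X = diagonal fun i => (rowSigma X i ^ 2)⁻¹ * d i := by
  simp only [Pmat, diagonal_mul_diagonal]
  congr 1 with i
  ring

def layerNormDeriv (X : Matrix (Fin m) (Fin n) ℝ) :
    Matrix (Fin m) (Fin n) ℝ →L[ℝ] Matrix (Fin m) (Fin n) ℝ :=
  mulCLM.precompR _ (Pmat X) (centeredCLM m n) +
    mulCLM.precompL _
      (diagonalCLM.comp (.pi fun i => (-(rowSigma X i ^ 2)⁻¹) • rowSigmaDeriv X i)) (centered X)

theorem hasFDerivAt_layerNorm {X : Matrix (Fin m) (Fin n) ℝ} (hσ : ∀ i, 0 < rowSigma X i) :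
    HasFDerivAt (fun Y => layerNorm Y) (layerNormDeriv X) X :=
  mulCLM.hasFDerivAt_of_bilinear (hasFDerivAt_Pmat hσ) (hasFDerivAt_centered X)

theorem layerNormDeriv_apply (X V : Matrix (Fin m) (Fin n) ℝ) :
    layerNormDeriv X V =
      Pmat X * (V * centerC n) -
        Pmat X * diagonal (fun i =>
          ((n : ℝ) * rowSigma X i)⁻¹ * ∑ j, centered X i j * (V * centerC n) i j) *
          Pmat X * centered X := by
  rw [Pmat_mul_diagonal_mul_Pmat, sub_eq_add_neg, ← Matrix.neg_mul]
  simp [layerNormDeriv, rowSigmaDeriv_apply]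

end FrobeniusTopology

/-- Jacobian of LayerNorm.  If every row standard deviation of `X` is
positive, then `LayerNorm` is Fréchet differentiable at `X` with derivative
`V ↦ P(X)·(V·C) − P(X)·diag(δ(V))·P(X)·M(X)`, where
`δ(V)ᵢ = (1/(n·σᵢ(X)))·Σⱼ M(X)ᵢⱼ·(V·C)ᵢⱼ`. -/
theorem layerNorm_derivative {m n : ℕ} (X : Matrix (Fin m) (Fin n) ℝ)
    (hσ : ∀ i, 0 < rowSigma X i) :
    DifferentiableAt ℝ (fun Y : Matrix (Fin m) (Fin n) ℝ => layerNorm Y) X ∧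
    ∀ V : Matrix (Fin m) (Fin n) ℝ,
      fderiv ℝ (fun Y : Matrix (Fin m) (Fin n) ℝ => layerNorm Y) X V =
        Pmat X * (V * centerC n) -
          Pmat X *
            Matrix.diagonal (fun i =>
              ((n : ℝ) * rowSigma X i)⁻¹ * ∑ j, centered X i j * (V * centerC n) i j) *
            Pmat X * centered X := by
  have hLN := hasFDerivAt_layerNorm hσ
  exact ⟨hLN.differentiableAt, fun V =>
    (congrArg (· V) hLN.fderiv).trans (layerNormDeriv_apply X V)⟩
end
end

section
/- Under the assumption that every row standard deviation σ_i(X) is positive, the map X ↦ P(X) is twice Fréchet differentiable at X, the map X ↦ LayerNorm(X) is twice Fréchet differentiable at X, and its second derivative in directions U, V ∈ ℝ^{m×n} is D²LayerNorm(X)[U, V] = DP(X)[U]·(V·C) + DP(X)[V]·(U·C) + D²P(X)[U, V]·M(X), where DP(X) and D²P(X) denote the first and second Fréchet derivatives of the matrix-valued map X ↦ P(X) = diag(σ(X))⁻¹ (the contribution of M vanishes at second order because M is affine in X). -/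
noncomputable section

open Matrix

attribute [local instance] Matrix.frobeniusNormedAddCommGroup Matrix.frobeniusNormedSpace

open ContinuousLinearMap Topology

/-! `LayerNorm(Y) = B (P Y) (L Y)` with `B` the (continuous bilinear) matrix product and
`L Y = Y·C` linear. For `y ↦ B (f y) (L y)` with `f` of class `C²`, the Leibniz rule gives the
second derivative `B (f' U) (L V) + B (f' V) (L U) + B (f'' U V) (L x)`: the fourth term
`B (f x) (L'' U V)` vanishes because `L` is linear. Where all `σᵢ` are positive, `P` is smooth,
being built from linear maps, squares, a square root away from `0` and an inversion away
from `0`. -/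

section Bilinear

variable {𝕜 E F G H : Type*} [NontriviallyNormedField 𝕜] [NormedAddCommGroup E] [NormedSpace 𝕜 E]
  [NormedAddCommGroup F] [NormedSpace 𝕜 F] [NormedAddCommGroup G] [NormedSpace 𝕜 G]
  [NormedAddCommGroup H] [NormedSpace 𝕜 H] (B : F →L[𝕜] G →L[𝕜] H) (L : E →L[𝕜] G)
  {f : E → F} {x : E}

theorem ContDiffAt.differentiableAt_fderiv (hf : ContDiffAt 𝕜 2 f x) :
    DifferentiableAt 𝕜 (fderiv 𝕜 f) x :=
  (hf.fderiv_right (m := 1) le_rfl).differentiableAt one_ne_zero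

theorem ContDiffAt.bilinear_clm_apply {k : WithTop ℕ∞} (hf : ContDiffAt 𝕜 k f x) :
    ContDiffAt 𝕜 k (fun y => B (f y) (L y)) x :=
  (B.contDiff.contDiffAt.comp x hf).clm_apply L.contDiff.contDiffAt

theorem fderiv_bilinear_clm_apply_eventuallyEq (hf : ∀ᶠ y in 𝓝 x, DifferentiableAt 𝕜 f y) :
    fderiv 𝕜 (fun y => B (f y) (L y)) =ᶠ[𝓝 x]
      fun y => B.precompR E (f y) L + B.precompL E (fderiv 𝕜 f y) (L y) := by
  filter_upwards [hf] with y hy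
  exact (B.hasFDerivAt_of_bilinear hy.hasFDerivAt L.hasFDerivAt).fderiv

theorem ContDiffAt.fderiv_fderiv_bilinear_clm_apply (hf : ContDiffAt 𝕜 2 f x) (U V : E) :
    fderiv 𝕜 (fderiv 𝕜 fun y => B (f y) (L y)) x U V =
      B (fderiv 𝕜 f x U) (L V) + B (fderiv 𝕜 f x V) (L U) +
        B (fderiv 𝕜 (fderiv 𝕜 f) x U V) (L x) := by
  have hdiff : ∀ᶠ y in 𝓝 x, DifferentiableAt 𝕜 f y :=
    (hf.eventually (by simp)).mono fun y hy => hy.differentiableAt two_ne_zero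
  have hf' := hf.differentiableAt two_ne_zero
  have hf'' := hf.differentiableAt_fderiv
  have hD : HasFDerivAt (fun y => B.precompR E (f y) L + B.precompL E (fderiv 𝕜 f y) (L y))
      ((B.precompR E).precompR E (f x) 0 + (B.precompR E).precompL E (fderiv 𝕜 f x) L +
        ((B.precompL E).precompR E (fderiv 𝕜 f x) L +
          (B.precompL E).precompL E (fderiv 𝕜 (fderiv 𝕜 f) x) (L x))) x :=
    ((B.precompR E).hasFDerivAt_of_bilinear hf'.hasFDerivAt (hasFDerivAt_const L x)).add
      ((B.precompL E).hasFDerivAt_of_bilinear hf''.hasFDerivAt L.hasFDerivAt)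
  rw [(fderiv_bilinear_clm_apply_eventuallyEq B L hdiff).fderiv_eq, hD.fderiv]
  simp only [_root_.add_apply, precompR_apply, precompL_apply, compL_apply,
    ContinuousLinearMap.comp_apply, _root_.zero_apply, map_zero]
  abel

end Bilinear

section LayerNorm

variable {m n : ℕ}

def matMulCLM :
    Matrix (Fin m) (Fin m) ℝ →L[ℝ] Matrix (Fin m) (Fin n) ℝ →L[ℝ] Matrix (Fin m) (Fin n) ℝ :=
  (mulLinearMap ℝ).toContinuousBilinearMap

def centeringCLM : Matrix (Fin m) (Fin n) ℝ →L[ℝ] Matrix (Fin m) (Fin n) ℝ :=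
  (mulRightLinearMap (Fin m) ℝ (centerC n)).toContinuousLinearMap

theorem layerNorm_eq_matMulCLM :
    (fun Y : Matrix (Fin m) (Fin n) ℝ => layerNorm Y) =
      fun Y => matMulCLM (Pmat Y) (centeringCLM Y) :=
  rfl

theorem contDiff_centered_apply {k : WithTop ℕ∞} (i : Fin m) (j : Fin n) :
    ContDiff ℝ k fun Y : Matrix (Fin m) (Fin n) ℝ => centered Y i j :=
  ((Matrix.entryLinearMap ℝ ℝ i j).toContinuousLinearMap.comp centeringCLM).contDiff

theorem contDiffAt_rowSigma {k : WithTop ℕ∞} {X : Matrix (Fin m) (Fin n) ℝ} {i : Fin m}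
    (hσ : 0 < rowSigma X i) : ContDiffAt ℝ k (fun Y => rowSigma Y i) X :=
  (contDiff_const.mul (ContDiff.sum fun j _ => (contDiff_centered_apply i j).pow 2)).contDiffAt.sqrt
    (Real.sqrt_pos.mp hσ).ne'

theorem contDiffAt_Pmat {k : WithTop ℕ∞} {X : Matrix (Fin m) (Fin n) ℝ}
    (hσ : ∀ i, 0 < rowSigma X i) : ContDiffAt ℝ k (fun Y => Pmat Y) X :=
  (Matrix.diagonalLinearMap (Fin m) ℝ ℝ).toContinuousLinearMap.contDiff.contDiffAt.comp X
    (contDiffAt_pi.2 fun i => (contDiffAt_rowSigma (hσ i)).inv (hσ i).ne')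

end LayerNorm

/-- Hessian of LayerNorm.  If every row standard deviation of `X` is
positive, then `X ↦ P(X)` and `X ↦ LayerNorm(X)` are twice Fréchet differentiable at `X`
and the second derivative of LayerNorm is
`D²LayerNorm(X)[U,V] = DP(X)[U]·(V·C) + DP(X)[V]·(U·C) + D²P(X)[U,V]·M(X)`. -/
theorem layerNorm_second_derivative {m n : ℕ} (X : Matrix (Fin m) (Fin n) ℝ)
    (hσ : ∀ i, 0 < rowSigma X i) :
    DifferentiableAt ℝ (fun Y : Matrix (Fin m) (Fin n) ℝ => Pmat Y) X ∧
    DifferentiableAt ℝ (fderiv ℝ (fun Y : Matrix (Fin m) (Fin n) ℝ => Pmat Y)) X ∧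
    DifferentiableAt ℝ (fun Y : Matrix (Fin m) (Fin n) ℝ => layerNorm Y) X ∧
    DifferentiableAt ℝ (fderiv ℝ (fun Y : Matrix (Fin m) (Fin n) ℝ => layerNorm Y)) X ∧
    ∀ U V : Matrix (Fin m) (Fin n) ℝ,
      fderiv ℝ (fderiv ℝ (fun Y : Matrix (Fin m) (Fin n) ℝ => layerNorm Y)) X U V =
        fderiv ℝ (fun Y : Matrix (Fin m) (Fin n) ℝ => Pmat Y) X U * (V * centerC n) +
        fderiv ℝ (fun Y : Matrix (Fin m) (Fin n) ℝ => Pmat Y) X V * (U * centerC n) +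
        fderiv ℝ (fderiv ℝ (fun Y : Matrix (Fin m) (Fin n) ℝ => Pmat Y)) X U V *
          centered X := by
  have hP : ContDiffAt ℝ 2 (fun Y => Pmat Y) X := contDiffAt_Pmat hσ
  have hLN := hP.bilinear_clm_apply matMulCLM centeringCLM
  rw [layerNorm_eq_matMulCLM]
  exact ⟨hP.differentiableAt two_ne_zero, hP.differentiableAt_fderiv,
    hLN.differentiableAt two_ne_zero, hLN.differentiableAt_fderiv,
    hP.fderiv_fderiv_bilinear_clm_apply matMulCLM centeringCLM⟩
end
end

section
/- For every Y ∈ ℝ^{L×d_V}, W₁ ∈ ℝ^{d_V×d_ff} and W₂ ∈ ℝ^{d_ff×d_V}, the feed-forward output satisfies ‖ReLU(Y·W₁)·W₂‖₂ ≤ sqrt(min(L, d_ff))·‖Y‖₂·‖W₁‖₂·‖W₂‖₂. -/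
noncomputable section

open Matrix

attribute [local instance] Matrix.frobeniusNormedAddCommGroup Matrix.frobeniusNormedSpace

/-- Entrywise ReLU of a matrix: `ReLU(X)ᵢⱼ = max(0, Xᵢⱼ)`. -/
def reluM {m n : ℕ} (X : Matrix (Fin m) (Fin n) ℝ) : Matrix (Fin m) (Fin n) ℝ :=
  Matrix.of fun i j => max 0 (X i j)

lemma spec_eq_l2 {m n : ℕ} (A : Matrix (Fin m) (Fin n) ℝ) :
    spec A = @norm _ (Matrix.instL2OpNormedAddCommGroup
      (m := Fin m) (n := Fin n) (𝕜 := ℝ)).toNorm A := rfl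

lemma spec_nonneg {m n : ℕ} (A : Matrix (Fin m) (Fin n) ℝ) : 0 ≤ spec A :=
  norm_nonneg _

lemma spec_mul {m n k : ℕ} (A : Matrix (Fin m) (Fin n) ℝ) (B : Matrix (Fin n) (Fin k) ℝ) :
    spec (A * B) ≤ spec A * spec B := by
  rw [spec_eq_l2, spec_eq_l2, spec_eq_l2]
  exact Matrix.l2_opNorm_mul A B

lemma spec_transpose {m n : ℕ} (A : Matrix (Fin m) (Fin n) ℝ) : spec Aᵀ = spec A := by
  rw [spec_eq_l2, spec_eq_l2]
  have : Aᵀ = Aᴴ := by ext i j; simp [Matrix.conjTranspose_apply]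
  rw [this]
  exact Matrix.l2_opNorm_conjTranspose A

lemma frob_nonneg {m n : ℕ} (A : Matrix (Fin m) (Fin n) ℝ) : 0 ≤ frob A :=
  Real.sqrt_nonneg _

lemma spec_le_frob {m n : ℕ} (A : Matrix (Fin m) (Fin n) ℝ) : spec A ≤ frob A := by
  apply ContinuousLinearMap.opNorm_le_bound _ (frob_nonneg A)
  intro x
  have hx : ‖x‖ = Real.sqrt (∑ j, (x j) ^ 2) := by
    rw [EuclideanSpace.norm_eq]
    congr 1
    exact Finset.sum_congr rfl fun j _ => by rw [Real.norm_eq_abs, sq_abs]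
  have happ : ∀ i, (LinearMap.toContinuousLinearMap (Matrix.toEuclideanLin A)) x i
      = ∑ j, A i j * x j := fun i => rfl
  have hAx : ‖(LinearMap.toContinuousLinearMap (Matrix.toEuclideanLin A)) x‖
      = Real.sqrt (∑ i, (∑ j, A i j * x j) ^ 2) := by
    rw [EuclideanSpace.norm_eq]
    congr 1
    exact Finset.sum_congr rfl fun i _ => by rw [happ i, Real.norm_eq_abs, sq_abs]
  rw [hAx, hx, frob, ← Real.sqrt_mul (by positivity)]
  apply Real.sqrt_le_sqrt
  rw [Finset.sum_mul]
  apply Finset.sum_le_sum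
  intro i _
  exact Finset.sum_mul_sq_le_sq_mul_sq _ _ _

lemma frob_transpose {m n : ℕ} (A : Matrix (Fin m) (Fin n) ℝ) : frob Aᵀ = frob A := by
  rw [frob, frob, Finset.sum_comm]
  rfl

lemma col_sq_le {m n : ℕ} (A : Matrix (Fin m) (Fin n) ℝ) (j : Fin n) :
    ∑ i, A i j ^ 2 ≤ spec A ^ 2 := by
  have h := (LinearMap.toContinuousLinearMap (Matrix.toEuclideanLin A)).le_opNorm
    (EuclideanSpace.single j (1 : ℝ))
  rw [EuclideanSpace.norm_single, norm_one, mul_one] at h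
  have happ : (LinearMap.toContinuousLinearMap (Matrix.toEuclideanLin A))
      (EuclideanSpace.single j (1 : ℝ)) = fun i => A i j := by
    funext i
    show ∑ k, A i k * (EuclideanSpace.single j (1:ℝ) k) = A i j
    simp [EuclideanSpace.single_apply]
  have hn : ‖(LinearMap.toContinuousLinearMap (Matrix.toEuclideanLin A))
      (EuclideanSpace.single j (1 : ℝ))‖ = Real.sqrt (∑ i, A i j ^ 2) := by
    rw [EuclideanSpace.norm_eq]
    congr 1
    refine Finset.sum_congr rfl fun i _ => ?_
    rw [congrFun happ i, Real.norm_eq_abs, sq_abs]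
  rw [hn] at h
  calc ∑ i, A i j ^ 2 = Real.sqrt (∑ i, A i j ^ 2) ^ 2 := by
        rw [Real.sq_sqrt (by positivity)]
    _ ≤ spec A ^ 2 := by
        apply pow_le_pow_left₀ (Real.sqrt_nonneg _) h 2

lemma frob_le_sqrt_cols {m n : ℕ} (A : Matrix (Fin m) (Fin n) ℝ) :
    frob A ≤ Real.sqrt n * spec A := by
  rw [frob, ← Real.sqrt_sq (spec_nonneg A), ← Real.sqrt_mul (by positivity)]
  apply Real.sqrt_le_sqrt
  rw [Finset.sum_comm]
  calc ∑ j, ∑ i, A i j ^ 2 ≤ ∑ _j : Fin n, spec A ^ 2 :=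
        Finset.sum_le_sum fun j _ => col_sq_le A j
    _ = n * spec A ^ 2 := by simp

lemma frob_le_sqrt_rows {m n : ℕ} (A : Matrix (Fin m) (Fin n) ℝ) :
    frob A ≤ Real.sqrt m * spec A := by
  rw [← frob_transpose A, ← spec_transpose A]
  exact frob_le_sqrt_cols Aᵀ

lemma frob_relu_le {m n : ℕ} (X : Matrix (Fin m) (Fin n) ℝ) :
    frob (reluM X) ≤ frob X := by
  apply Real.sqrt_le_sqrt
  apply Finset.sum_le_sum; intro i _
  apply Finset.sum_le_sum; intro j _
  have : reluM X i j = max 0 (X i j) := rfl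
  rw [this]
  rcases le_total 0 (X i j) with h | h
  · rw [max_eq_right h]
  · rw [max_eq_left h]; simpa using sq_nonneg (X i j)

lemma frob_le_sqrt_min {m n : ℕ} (A : Matrix (Fin m) (Fin n) ℝ) :
    frob A ≤ Real.sqrt (min (m : ℝ) n) * spec A := by
  rcases le_total (m : ℝ) (n : ℝ) with h | h
  · rw [min_eq_left h]; exact frob_le_sqrt_rows A
  · rw [min_eq_right h]; exact frob_le_sqrt_cols A

/-- The feed-forward output satisfies
`‖ReLU(Y·W₁)·W₂‖₂ ≤ sqrt(min(L, d_ff))·‖Y‖₂·‖W₁‖₂·‖W₂‖₂`. -/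
theorem ffn_spectral_bound {L dV dff : ℕ} (Y : Matrix (Fin L) (Fin dV) ℝ)
    (W1 : Matrix (Fin dV) (Fin dff) ℝ) (W2 : Matrix (Fin dff) (Fin dV) ℝ) :
    spec (reluM (Y * W1) * W2) ≤
      Real.sqrt (min (L : ℝ) dff) * spec Y * spec W1 * spec W2 := by
  calc spec (reluM (Y * W1) * W2) ≤ spec (reluM (Y * W1)) * spec W2 := spec_mul _ _
    _ ≤ (Real.sqrt (min (L : ℝ) dff) * spec (Y * W1)) * spec W2 := by
        refine mul_le_mul_of_nonneg_right ?_ (spec_nonneg W2)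
        exact (spec_le_frob _).trans ((frob_relu_le _).trans (frob_le_sqrt_min _))
    _ = Real.sqrt (min (L : ℝ) dff) * (spec (Y * W1) * spec W2) := by ring
    _ ≤ Real.sqrt (min (L : ℝ) dff) * ((spec Y * spec W1) * spec W2) := by
        exact mul_le_mul_of_nonneg_left
          (mul_le_mul_of_nonneg_right (spec_mul Y W1) (spec_nonneg W2))
          (Real.sqrt_nonneg _)
    _ = Real.sqrt (min (L : ℝ) dff) * spec Y * spec W1 * spec W2 := by ring
end
end
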